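/- Hybrid-critic approximation error bound (Lemma 6 / lemma:7 of the paper, stated for an arbitrary policy): Suppose μ(s,a) > 0 for all (s,a) and write μ_min := min_{(s,a)} μ(s,a). Let π be a policy, α ∈ [0,1], Q_tar : S × A → ℝ and g : S × A → ℝ arbitrary functions, and set f(s,a) := (1−α)·Q_tar(s,a) + α·g(s,a). Then E_{(s,a)~d^π}[ |f(s,a) − Q^π(s,a)| ] ≤ (1/((1−γ)² μ_min)) · [ (1−α) · E_{(s,a)~d^π}[ε_td(s,a; Q_tar, π)] + α · E_{(s,a)~d^π}[ε_cd(s,a; g, π)] ], where ε_td(s,a; Q_tar, π) := |Q_tar(s,a) − r(s,a) − γ E_{s'~P(·|s,a), a'~π(·|s')}[Q_tar(s',a')]| and ε_cd(s,a; g, π) := |g(s,a) − r(s,a) − γ E_{s'~P(·|s,a), a'~π(·|s')}[g(s',a')]|. -/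

import Mathlib

open Finset

/-- `p` is a probability distribution on the finite type `X`. -/
def IsDist {X : Type*} [Fintype X] (p : X → ℝ) : Prop :=
  (∀ x, 0 ≤ p x) ∧ ∑ x, p x = 1

/-- `p` is a probability distribution on state–action pairs. -/
def IsDist2 {S A : Type*} [Fintype S] [Fintype A] (p : S → A → ℝ) : Prop :=
  (∀ s a, 0 ≤ p s a) ∧ ∑ s, ∑ a, p s a = 1

/-- `P` is a transition kernel: `P s a` is a distribution over next states. -/
def IsKernel {S A : Type*} [Fintype S] [Fintype A] (P : S → A → S → ℝ) : Prop :=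
  ∀ s a, IsDist (P s a)

/-- `π` is a (stationary Markov) policy: `π s` is a distribution over actions. -/
def IsPolicy {S A : Type*} [Fintype S] [Fintype A] (π : S → A → ℝ) : Prop :=
  ∀ s, IsDist (π s)

/-- One-step evolution of a state–action distribution under kernel `P` and policy `π`:
the next state is drawn from `P`, the next action from `π`. -/
noncomputable def step {S A : Type*} [Fintype S] [Fintype A]
    (P : S → A → S → ℝ) (π : S → A → ℝ) (d : S → A → ℝ) : S → A → ℝ :=
  fun s' a' => (∑ s, ∑ a, d s a * P s a s') * π s' a'

/-- Distribution of `(s_t, a_t)` along the trajectory started at the state–action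
distribution `μ` and evolving under `P` and `π`. -/
noncomputable def traj {S A : Type*} [Fintype S] [Fintype A]
    (P : S → A → S → ℝ) (π : S → A → ℝ) (μ : S → A → ℝ) (t : ℕ) : S → A → ℝ :=
  (step P π)^[t] μ

/-- Discounted state–action visitation distribution
`d^π(s,a) = (1-γ) ∑_t γ^t Pr(s_t = s, a_t = a; π, μ)`. -/
noncomputable def dvisit {S A : Type*} [Fintype S] [Fintype A]
    (P : S → A → S → ℝ) (π : S → A → ℝ) (γ : ℝ) (μ : S → A → ℝ) (s : S) (a : A) : ℝ :=
  (1 - γ) * ∑' t : ℕ, γ ^ t * traj P π μ t s a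

/-- Point mass at the state–action pair `(s, a)`. -/
def dirac {S A : Type*} [DecidableEq S] [DecidableEq A] (s : S) (a : A) : S → A → ℝ :=
  fun s' a' => if s' = s ∧ a' = a then 1 else 0

/-- Action-value function `Q^π(s,a) = E[∑_t γ^t r(s_t,a_t) | s₀ = s, a₀ = a]`,
with later actions drawn from `π` and transitions from `P`. -/
noncomputable def Qpi {S A : Type*} [Fintype S] [Fintype A] [DecidableEq S] [DecidableEq A]
    (P : S → A → S → ℝ) (r : S → A → ℝ) (π : S → A → ℝ) (γ : ℝ) (s : S) (a : A) : ℝ :=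
  ∑' t : ℕ, γ ^ t * ∑ s', ∑ a', traj P π (dirac s a) t s' a' * r s' a'

/-- Value function `V^π(s) = E_{a ~ π(·|s)}[Q^π(s,a)]`. -/
noncomputable def Vpi {S A : Type*} [Fintype S] [Fintype A] [DecidableEq S] [DecidableEq A]
    (P : S → A → S → ℝ) (r : S → A → ℝ) (π : S → A → ℝ) (γ : ℝ) (s : S) : ℝ :=
  ∑ a, π s a * Qpi P r π γ s a

/-- Bellman error of a function `Q` with respect to the policy `π`
(the TD error `ε_td` when `Q` is a target critic, and the cross-domain Bellman
error `ε_cd` when `Q` is a composed source critic `g`). -/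
noncomputable def bellErr {S A : Type*} [Fintype S] [Fintype A]
    (P : S → A → S → ℝ) (r : S → A → ℝ) (γ : ℝ) (π : S → A → ℝ)
    (Q : S → A → ℝ) (s : S) (a : A) : ℝ :=
  |Q s a - r s a - γ * ∑ s', P s a s' * ∑ a', π s' a' * Q s' a'|

/-- NPG-style exponentiated-update policy sequence: `npg ν η 0` is the uniform policy,
and `npg ν η (t+1)` is the exponentiated update of `npg ν η t` along `ν t`. -/
noncomputable def npg {S A : Type*} [Fintype S] [Fintype A]
    (ν : ℕ → S → A → ℝ) (η : ℝ) : ℕ → S → A → ℝ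
  | 0 => fun _ _ => (Fintype.card A : ℝ)⁻¹
  | t + 1 => fun s a =>
      npg ν η t s a * Real.exp (η * ν t s a) /
        ∑ a', npg ν η t s a' * Real.exp (η * ν t s a')

/-!
`Q^π` is the Neumann series `∑ γᵗ (P^π)ᵗ r`, hence the fixed point of `F ↦ r + γ P^π F`.
Since `P^π` averages, at a pair `(s₀, a₀)` where `|F - Q^π|` is largest the Bellman error of `F`
is at least `(1 - γ) ‖F - Q^π‖_∞`, and `‖F - Q^π‖_∞` dominates `E_{d^π} |F - Q^π|`.
The visitation distribution satisfies `d^π ≥ (1 - γ) μ ≥ (1 - γ) μ_min`, so that single Bellman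
error is at most `E_{d^π}[ε(F)] / ((1 - γ) μ_min)`. Finally the Bellman error is convex in the
critic, which splits `ε` of the hybrid critic into `(1 - α) ε_td + α ε_cd`.
-/

lemma summable_pow_mul_of_abs_le {γ M : ℝ} {x : ℕ → ℝ} (hγ : |γ| < 1) (hx : ∀ t, |x t| ≤ M) :
    Summable fun t => γ ^ t * x t :=
  ((summable_geometric_of_lt_one (abs_nonneg γ) hγ).mul_right M).of_norm_bounded fun t => by
    rw [Real.norm_eq_abs, abs_mul, abs_pow]
    exact mul_le_mul_of_nonneg_left (hx t) (pow_nonneg (abs_nonneg γ) t)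

section

variable {S A : Type*} [Fintype S] [Fintype A]

def expectation (d f : S → A → ℝ) : ℝ :=
  ∑ s, ∑ a, d s a * f s a

def Ppi (P : S → A → S → ℝ) (π : S → A → ℝ) : (S → A → ℝ) →ₗ[ℝ] (S → A → ℝ) where
  toFun F s a := ∑ s', P s a s' * ∑ a', π s' a' * F s' a'
  map_add' F G := by
    ext s a
    simp only [Pi.add_apply, mul_add, sum_add_distrib]
  map_smul' c F := by
    ext s a
    simp only [Pi.smul_apply, smul_eq_mul, RingHom.id_apply, mul_sum]
    exact sum_congr rfl fun _ _ => sum_congr rfl fun _ _ => by ring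

variable {P : S → A → S → ℝ} {π : S → A → ℝ}

lemma Ppi_apply (F : S → A → ℝ) (s : S) (a : A) :
    Ppi P π F s a = ∑ s', P s a s' * ∑ a', π s' a' * F s' a' := rfl

lemma bellErr_eq (r : S → A → ℝ) (γ : ℝ) (Q : S → A → ℝ) (s : S) (a : A) :
    bellErr P r γ π Q s a = |Q s a - r s a - γ * Ppi P π Q s a| := rfl

lemma Ppi_const (hP : IsKernel P) (hπ : IsPolicy π) (c : ℝ) :
    Ppi P π (fun _ _ => c) = fun _ _ => c := by
  ext s a
  simp only [Ppi_apply, ← sum_mul, (hπ _).2, one_mul, (hP s a).2]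

lemma abs_Ppi_le (hP : IsKernel P) (hπ : IsPolicy π) {F : S → A → ℝ} {M : ℝ}
    (hF : ∀ s a, |F s a| ≤ M) (s : S) (a : A) : |Ppi P π F s a| ≤ M :=
  calc |Ppi P π F s a| ≤ Ppi P π (fun _ _ => M) s a := by
        refine (abs_sum_le_sum_abs _ _).trans (sum_le_sum fun s' _ => ?_)
        rw [abs_mul, abs_of_nonneg ((hP s a).1 s')]
        refine mul_le_mul_of_nonneg_left ?_ ((hP s a).1 s')
        refine (abs_sum_le_sum_abs _ _).trans (sum_le_sum fun a' _ => ?_)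
        rw [abs_mul, abs_of_nonneg ((hπ s').1 a')]
        exact mul_le_mul_of_nonneg_left (hF s' a') ((hπ s').1 a')
    _ = M := by rw [Ppi_const hP hπ]

lemma abs_Ppi_iterate_le (hP : IsKernel P) (hπ : IsPolicy π) {F : S → A → ℝ} {M : ℝ}
    (hF : ∀ s a, |F s a| ≤ M) (t : ℕ) (s : S) (a : A) : |(Ppi P π)^[t] F s a| ≤ M := by
  induction t generalizing s a with
  | zero => exact hF s a
  | succ t ih => rw [Function.iterate_succ_apply']; exact abs_Ppi_le hP hπ ih s a

lemma Ppi_tsum {G : ℕ → S → A → ℝ} (hG : ∀ s a, Summable fun t => G t s a) (s : S) (a : A) :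
    Ppi P π (fun s a => ∑' t, G t s a) s a = ∑' t, Ppi P π (G t) s a := by
  simp only [Ppi_apply]
  rw [Summable.tsum_finsetSum fun s' _ =>
    (summable_sum fun a' _ => (hG s' a').mul_left _).mul_left _]
  refine sum_congr rfl fun s' _ => ?_
  rw [tsum_mul_left, Summable.tsum_finsetSum fun a' _ => (hG s' a').mul_left _]
  simp only [tsum_mul_left]

lemma single_le_sum_sum {f : S → A → ℝ} (hf : ∀ s a, 0 ≤ f s a) (s : S) (a : A) :
    f s a ≤ ∑ s', ∑ a', f s' a' :=
  (single_le_sum (fun a' _ => hf s a') (mem_univ a)).trans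
    (single_le_sum (fun s' _ => sum_nonneg fun a' _ => hf s' a') (mem_univ s))

lemma IsDist2.le_one {d : S → A → ℝ} (hd : IsDist2 d) (s : S) (a : A) : d s a ≤ 1 :=
  hd.2 ▸ single_le_sum_sum hd.1 s a

lemma IsDist2.expectation_le {d f : S → A → ℝ} {M : ℝ} (hd : IsDist2 d)
    (hf : ∀ s a, f s a ≤ M) : expectation d f ≤ M :=
  calc expectation d f ≤ ∑ s, ∑ a, d s a * M := by
        unfold expectation
        gcongr with s _ a _
        exacts [hd.1 s a, hf s a]
    _ = M := by simp only [← sum_mul, hd.2, one_mul]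

lemma expectation_mono {d f g : S → A → ℝ} (hd : ∀ s a, 0 ≤ d s a)
    (hfg : ∀ s a, f s a ≤ g s a) : expectation d f ≤ expectation d g := by
  unfold expectation
  gcongr with s _ a _
  exacts [hd s a, hfg s a]

lemma expectation_add (d f g : S → A → ℝ) :
    expectation d (f + g) = expectation d f + expectation d g := by
  simp only [expectation, Pi.add_apply, mul_add, sum_add_distrib]

lemma expectation_smul (d f : S → A → ℝ) (c : ℝ) :
    expectation d (c • f) = c * expectation d f := by
  simp only [expectation, Pi.smul_apply, smul_eq_mul, mul_sum, mul_left_comm]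

lemma expectation_dirac [DecidableEq S] [DecidableEq A] (s : S) (a : A) (f : S → A → ℝ) :
    expectation (dirac s a) f = f s a := by
  simp [expectation, dirac, ite_and]

lemma expectation_step (d f : S → A → ℝ) :
    expectation (step P π d) f = expectation d (Ppi P π f) := by
  simp only [expectation, step, Ppi_apply, sum_mul, mul_sum, ← Fintype.sum_prod_type']
  -- reindex by `(s', a', s, a) ↦ (s, a, s', a')`
  refine Fintype.sum_equiv ((Equiv.prodAssoc _ _ _).symm.trans
    ((Equiv.prodComm _ _).trans (Equiv.prodAssoc _ _ _))) _ _ fun _ => ?_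
  simp only [Equiv.trans_apply, Equiv.prodAssoc_symm_apply, Equiv.prodComm_apply, Prod.swap,
    Equiv.prodAssoc_apply]
  ring

lemma traj_succ (d : S → A → ℝ) (t : ℕ) : traj P π d (t + 1) = traj P π (step P π d) t :=
  Function.iterate_succ_apply _ _ _

lemma expectation_traj (d f : S → A → ℝ) (t : ℕ) :
    expectation (traj P π d t) f = expectation d ((Ppi P π)^[t] f) := by
  induction t generalizing d with
  | zero => rfl
  | succ t ih => rw [traj_succ, ih, expectation_step, Function.iterate_succ_apply']

lemma isDist2_step (hP : IsKernel P) (hπ : IsPolicy π) {d : S → A → ℝ} (hd : IsDist2 d) :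
    IsDist2 (step P π d) := by
  refine ⟨fun s a => mul_nonneg (sum_nonneg fun _ _ => sum_nonneg fun _ _ =>
    mul_nonneg (hd.1 _ _) ((hP _ _).1 s)) ((hπ s).1 a), ?_⟩
  simpa [expectation, Ppi_const hP hπ, hd.2] using
    expectation_step (P := P) (π := π) d fun _ _ => 1

lemma isDist2_traj (hP : IsKernel P) (hπ : IsPolicy π) {d : S → A → ℝ} (hd : IsDist2 d)
    (t : ℕ) : IsDist2 (traj P π d t) := by
  induction t generalizing d with
  | zero => exact hd
  | succ t ih => exact traj_succ d t ▸ ih (isDist2_step hP hπ hd)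

lemma summable_pow_mul_traj (hP : IsKernel P) (hπ : IsPolicy π) {d : S → A → ℝ}
    (hd : IsDist2 d) {γ : ℝ} (hγ : |γ| < 1) (s : S) (a : A) :
    Summable fun t => γ ^ t * traj P π d t s a :=
  summable_pow_mul_of_abs_le hγ fun t => by
    rw [abs_of_nonneg ((isDist2_traj hP hπ hd t).1 s a)]
    exact (isDist2_traj hP hπ hd t).le_one s a

theorem isDist2_dvisit (hP : IsKernel P) (hπ : IsPolicy π) {μ : S → A → ℝ} (hμ : IsDist2 μ)
    {γ : ℝ} (hγ0 : 0 ≤ γ) (hγ1 : γ < 1) : IsDist2 (dvisit P π γ μ) := by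
  have hsum := summable_pow_mul_traj hP hπ hμ (abs_lt.2 ⟨by linarith, hγ1⟩)
  refine ⟨fun s a => mul_nonneg (sub_nonneg.2 hγ1.le) (tsum_nonneg fun t =>
    mul_nonneg (pow_nonneg hγ0 t) ((isDist2_traj hP hπ hμ t).1 s a)), ?_⟩
  calc ∑ s, ∑ a, dvisit P π γ μ s a
      = (1 - γ) * ∑' t, ∑ s, ∑ a, γ ^ t * traj P π μ t s a := by
        rw [Summable.tsum_finsetSum fun s _ => summable_sum fun a _ => hsum s a]
        simp only [dvisit, mul_sum, Summable.tsum_finsetSum fun a _ => hsum _ a]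
    _ = (1 - γ) * ∑' t, γ ^ t := by
        simp only [← mul_sum, (isDist2_traj hP hπ hμ _).2, mul_one]
    _ = 1 := by
        rw [tsum_geometric_of_lt_one hγ0 hγ1]
        field_simp [(sub_pos.2 hγ1).ne']

lemma one_sub_mul_le_dvisit (hP : IsKernel P) (hπ : IsPolicy π) {μ : S → A → ℝ}
    (hμ : IsDist2 μ) {γ : ℝ} (hγ0 : 0 ≤ γ) (hγ1 : γ < 1) (s : S) (a : A) :
    (1 - γ) * μ s a ≤ dvisit P π γ μ s a := by
  refine mul_le_mul_of_nonneg_left ?_ (sub_nonneg.2 hγ1.le)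
  simpa [traj] using (summable_pow_mul_traj hP hπ hμ (abs_lt.2 ⟨by linarith, hγ1⟩) s a).le_tsum 0
    fun t _ => mul_nonneg (pow_nonneg hγ0 t) ((isDist2_traj hP hπ hμ t).1 s a)

lemma one_sub_mul_mul_le_expectation_dvisit (hP : IsKernel P) (hπ : IsPolicy π)
    {μ : S → A → ℝ} (hμ : IsDist2 μ) {γ : ℝ} (hγ0 : 0 ≤ γ) (hγ1 : γ < 1) {f : S → A → ℝ}
    (hf : ∀ s a, 0 ≤ f s a) (s : S) (a : A) :
    (1 - γ) * μ s a * f s a ≤ expectation (dvisit P π γ μ) f :=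
  (mul_le_mul_of_nonneg_right (one_sub_mul_le_dvisit hP hπ hμ hγ0 hγ1 s a) (hf s a)).trans
    (single_le_sum_sum (fun s a => mul_nonneg ((isDist2_dvisit hP hπ hμ hγ0 hγ1).1 s a) (hf s a))
      s a)

lemma Qpi_eq_tsum [DecidableEq S] [DecidableEq A] (r : S → A → ℝ) (γ : ℝ) (s : S) (a : A) :
    Qpi P r π γ s a = ∑' t, γ ^ t * (Ppi P π)^[t] r s a := by
  simp only [← expectation_dirac s a ((Ppi P π)^[_] r), ← expectation_traj]
  rfl

theorem Qpi_bellman [DecidableEq S] [DecidableEq A] (hP : IsKernel P) (hπ : IsPolicy π)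
    (r : S → A → ℝ) {γ : ℝ} (hγ : |γ| < 1) (s : S) (a : A) :
    Qpi P r π γ s a = r s a + γ * Ppi P π (Qpi P r π γ) s a := by
  obtain ⟨M, hM⟩ : ∃ M, ∀ s a, |r s a| ≤ M :=
    ⟨_, single_le_sum_sum fun s a => abs_nonneg (r s a)⟩
  have hsum : ∀ s a, Summable fun t => γ ^ t * (Ppi P π)^[t] r s a := fun s a =>
    summable_pow_mul_of_abs_le hγ fun t => abs_Ppi_iterate_le hP hπ hM t s a
  have hQ : Qpi P r π γ = fun s a => ∑' t, γ ^ t * (Ppi P π)^[t] r s a :=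
    funext₂ (Qpi_eq_tsum r γ)
  rw [hQ]
  dsimp only
  rw [(hsum s a).tsum_eq_zero_add, Ppi_tsum hsum, ← tsum_mul_left]
  congr 1
  · simp
  · refine tsum_congr fun t => ?_
    rw [Function.iterate_succ_apply', pow_succ]
    change _ = γ * Ppi P π (γ ^ t • (Ppi P π)^[t] r) s a
    rw [map_smul, Pi.smul_apply, Pi.smul_apply, smul_eq_mul]
    ring

theorem one_sub_mul_abs_sub_Qpi_le_bellErr [DecidableEq S] [DecidableEq A]
    (hP : IsKernel P) (hπ : IsPolicy π) (r : S → A → ℝ) {γ : ℝ} (hγ0 : 0 ≤ γ) (hγ1 : γ < 1)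
    (F : S → A → ℝ) {s₀ : S} {a₀ : A}
    (hmax : ∀ s a, |F s a - Qpi P r π γ s a| ≤ |F s₀ a₀ - Qpi P r π γ s₀ a₀|) :
    (1 - γ) * |F s₀ a₀ - Qpi P r π γ s₀ a₀| ≤ bellErr P r γ π F s₀ a₀ := by
  set D := F - Qpi P r π γ
  have hres : F s₀ a₀ - r s₀ a₀ - γ * Ppi P π F s₀ a₀ = D s₀ a₀ - γ * Ppi P π D s₀ a₀ := by
    simp only [D, map_sub, Pi.sub_apply]
    rw [Qpi_bellman hP hπ r (abs_lt.2 ⟨by linarith, hγ1⟩) s₀ a₀]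
    ring
  have hPD : |Ppi P π D s₀ a₀| ≤ |D s₀ a₀| := abs_Ppi_le hP hπ hmax s₀ a₀
  calc (1 - γ) * |D s₀ a₀| ≤ |D s₀ a₀| - |γ * Ppi P π D s₀ a₀| := by
        rw [abs_mul, abs_of_nonneg hγ0]
        linarith [mul_le_mul_of_nonneg_left hPD hγ0]
    _ ≤ |D s₀ a₀ - γ * Ppi P π D s₀ a₀| := abs_sub_abs_le_abs_sub _ _
    _ = bellErr P r γ π F s₀ a₀ := by rw [bellErr_eq, hres]

variable (P π) in
theorem convexOn_bellErr (r : S → A → ℝ) (γ : ℝ) (s : S) (a : A) :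
    ConvexOn ℝ Set.univ fun Q => bellErr P r γ π Q s a := by
  refine ⟨convex_univ, fun F _ G _ b c hb hc hbc => ?_⟩
  simp only [bellErr_eq, map_add, map_smul, Pi.add_apply, Pi.smul_apply, smul_eq_mul]
  calc |b * F s a + c * G s a - r s a - γ * (b * Ppi P π F s a + c * Ppi P π G s a)|
      = |b * (F s a - r s a - γ * Ppi P π F s a) + c * (G s a - r s a - γ * Ppi P π G s a)| := by
        congr 1
        linear_combination (r s a) * hbc
    _ ≤ b * |F s a - r s a - γ * Ppi P π F s a| + c * |G s a - r s a - γ * Ppi P π G s a| := by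
        refine (abs_add_le _ _).trans_eq ?_
        rw [abs_mul, abs_mul, abs_of_nonneg hb, abs_of_nonneg hc]

variable (P π) in
theorem convexOn_expectation_bellErr {d : S → A → ℝ} (hd : ∀ s a, 0 ≤ d s a)
    (r : S → A → ℝ) (γ : ℝ) : ConvexOn ℝ Set.univ fun Q => expectation d (bellErr P r γ π Q) := by
  refine ⟨convex_univ, fun F _ G _ b c hb hc hbc => ?_⟩
  rw [smul_eq_mul, smul_eq_mul, ← expectation_smul, ← expectation_smul, ← expectation_add]
  exact expectation_mono hd fun s a => (convexOn_bellErr P π r γ s a).2 trivial trivial hb hc hbc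

end

theorem hybrid_critic_error_bound_general
    {S A : Type*} [Fintype S] [Fintype A] [Nonempty S] [Nonempty A]
    [DecidableEq S] [DecidableEq A]
    (P : S → A → S → ℝ) (r : S → A → ℝ) (γ : ℝ) (μ : S → A → ℝ)
    (hP : IsKernel P)
    (hγ0 : 0 ≤ γ) (hγ1 : γ < 1) (hμ : IsDist2 μ)
    (hμpos : ∀ s a, 0 < μ s a)
    (μmin : ℝ)
    (hμmin : μmin = Finset.univ.inf' Finset.univ_nonempty (fun p : S × A => μ p.1 p.2))
    (π : S → A → ℝ) (hπ : IsPolicy π)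
    (α : ℝ) (hα0 : 0 ≤ α) (hα1 : α ≤ 1)
    (Qtar g : S → A → ℝ) :
    ∑ s, ∑ a, dvisit P π γ μ s a *
        |((1 - α) * Qtar s a + α * g s a) - Qpi P r π γ s a|
      ≤ (1 / ((1 - γ) ^ 2 * μmin)) *
          ((1 - α) * ∑ s, ∑ a, dvisit P π γ μ s a * bellErr P r γ π Qtar s a +
            α * ∑ s, ∑ a, dvisit P π γ μ s a * bellErr P r γ π g s a) := by
  have hγ : 0 < 1 - γ := sub_pos.2 hγ1
  have hd := isDist2_dvisit hP hπ hμ hγ0 hγ1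
  set F : S → A → ℝ := (1 - α) • Qtar + α • g
  obtain ⟨⟨s₀, a₀⟩, hmax⟩ := Finite.exists_max fun p : S × A => |F p.1 p.2 - Qpi P r π γ p.1 p.2|
  have hμmin_pos : 0 < μmin := hμmin ▸ (Finset.lt_inf'_iff _).2 fun p _ => hμpos p.1 p.2
  have hμmin_le : μmin ≤ μ s₀ a₀ := hμmin ▸ Finset.inf'_le _ (Finset.mem_univ (s₀, a₀))
  have h_mean := hd.expectation_le fun s a => hmax (s, a)
  have h_contr := one_sub_mul_abs_sub_Qpi_le_bellErr hP hπ r hγ0 hγ1 F fun s a => hmax (s, a)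
  have h_visit := one_sub_mul_mul_le_expectation_dvisit hP hπ hμ hγ0 hγ1
    (f := bellErr P r γ π F) (fun _ _ => abs_nonneg _) s₀ a₀
  have h_convex := (convexOn_expectation_bellErr P π hd.1 r γ).2
    (Set.mem_univ Qtar) (Set.mem_univ g) (sub_nonneg.2 hα1) hα0 (sub_add_cancel 1 α)
  rw [one_div, inv_mul_eq_div, le_div_iff₀ (by positivity)]
  calc _ ≤ |F s₀ a₀ - Qpi P r π γ s₀ a₀| * ((1 - γ) ^ 2 * μmin) :=
        mul_le_mul_of_nonneg_right h_mean (by positivity)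
    _ = (1 - γ) * μmin * ((1 - γ) * |F s₀ a₀ - Qpi P r π γ s₀ a₀|) := by ring
    _ ≤ (1 - γ) * μ s₀ a₀ * bellErr P r γ π F s₀ a₀ :=
        mul_le_mul (by gcongr) h_contr (mul_nonneg hγ.le (abs_nonneg _))
          (mul_pos hγ (hμpos s₀ a₀)).le
    _ ≤ _ := h_visit.trans h_convex

/-- **Hybrid-critic approximation error bound.** If `μ(s,a) > 0` everywhere with
`μ_min = min_{(s,a)} μ(s,a)`, then for any policy `π`, `α ∈ [0,1]` and arbitrary
`Q_tar, g : S × A → ℝ`, the hybrid critic `f = (1−α) Q_tar + α g` satisfies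
`E_{d^π}[|f − Q^π|] ≤ (1/((1−γ)² μ_min)) ((1−α) E_{d^π}[ε_td] + α E_{d^π}[ε_cd])`. -/
theorem hybrid_critic_error_bound
    {S A : Type*} [Fintype S] [Fintype A] [Nonempty S] [Nonempty A]
    [DecidableEq S] [DecidableEq A]
    (P : S → A → S → ℝ) (r : S → A → ℝ) (γ : ℝ) (μ : S → A → ℝ)
    (hP : IsKernel P) (hr : ∀ s a, 0 ≤ r s a ∧ r s a ≤ 1)
    (hγ0 : 0 ≤ γ) (hγ1 : γ < 1) (hμ : IsDist2 μ)
    (hμpos : ∀ s a, 0 < μ s a)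
    (μmin : ℝ)
    (hμmin : μmin = Finset.univ.inf' Finset.univ_nonempty (fun p : S × A => μ p.1 p.2))
    (π : S → A → ℝ) (hπ : IsPolicy π)
    (α : ℝ) (hα0 : 0 ≤ α) (hα1 : α ≤ 1)
    (Qtar g : S → A → ℝ) :
    ∑ s, ∑ a, dvisit P π γ μ s a *
        |((1 - α) * Qtar s a + α * g s a) - Qpi P r π γ s a|
      ≤ (1 / ((1 - γ) ^ 2 * μmin)) *
          ((1 - α) * ∑ s, ∑ a, dvisit P π γ μ s a * bellErr P r γ π Qtar s a +
            α * ∑ s, ∑ a, dvisit P π γ μ s a * bellErr P r γ π g s a) :=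
  hybrid_critic_error_bound_general P r γ μ hP hγ0 hγ1 hμ hμpos μmin hμmin π hπ α hα0 hα1 Qtar g
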